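/- arXiv:1209.0440 — 5 statements merged into one kernel-verified Lean document; each statement's English description precedes it below -/
import Mathlib

section
/- Let ℓ : [0,T] → ℝ be continuous, nondecreasing with ℓ(0) = 0, let g : ℝⁿ → ℝᵖ and α : ℝⁿ → ℝ be continuous with α ≥ α₀ > 0, let x : [0,T] → ℝⁿ be continuous, and let Y(t) = exp(∫₀ᵗ α(x(u)) dℓ(u)). Suppose s : [0,T] → ℝᵖ is continuous, of bounded variation, and satisfies the Stieltjes equation s(t) = s(0) + ∫₀ᵗ (g(x(u)) − α(x(u)) s(u)) dℓ(u). Then s(t) = Y(t)⁻¹ s(0) + Y(t)⁻¹ ∫₀ᵗ (g(x(u))/α(x(u))) dY(u) for all t ∈ [0,T]. -/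
/-!
Write `A u = ∫_{(0,u]} α(x) dℓ`, so that `Y = exp A` on `[0, T]`. As `ℓ` is continuous, its
Lebesgue–Stieltjes measure has no atoms. The distribution function of an atomless finite measure
pushes it forward to Lebesgue measure on an interval; applied to `α(x) dℓ` this gives the chain
rule `d(exp A) = exp A · α(x) dℓ`, i.e. `dY = Y α(x) dℓ`. Integration by parts for atomless
measures (Fubini on the two triangles `v ≤ u` and `u < v`) then turns the equation for `s` into
`d(Y s) = Y g(x) dℓ = α(x)⁻¹ g(x) dY`, and integrating over `(0, t]` gives the formula.
-/

open MeasureTheory Set Filter Topology Real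
open scoped ENNReal

namespace MeasureTheory.Measure

section DistributionFunction

variable {ρ : Measure ℝ} [IsFiniteMeasure ρ]

theorem tendsto_measureReal_Iic_atBot : Tendsto (fun u => ρ.real (Iic u)) atBot (𝓝 0) := by
  have h := tendsto_measure_iInter_atBot (μ := ρ)
    (fun u : ℝ => measurableSet_Iic.nullMeasurableSet) (fun _ _ => Iic_subset_Iic.2)
    ⟨0, measure_ne_top ρ _⟩
  rw [iInter_Iic_eq_empty_iff.2 (not_bddBelow_iff.2 fun x => ⟨x - 1, by simp⟩),
    measure_empty] at h
  exact (ENNReal.tendsto_toReal ENNReal.zero_ne_top).comp h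

theorem tendsto_measureReal_Iic_atTop :
    Tendsto (fun u => ρ.real (Iic u)) atTop (𝓝 (ρ.real univ)) :=
  (ENNReal.tendsto_toReal (measure_ne_top ρ univ)).comp (tendsto_measure_Iic_atTop ρ)

variable [NullSingletonClass ρ]

theorem continuous_measureReal_Iic : Continuous fun u => ρ.real (Iic u) := by
  have h : (fun u => ρ.real (Iic u)) = fun u => ρ.real (Iic 0) + ∫ _ in 0..u, (1 : ℝ) ∂ρ := by
    ext u
    rw [← intervalIntegral.integral_Iic_sub_Iic (integrableOn_const (by finiteness))
      (integrableOn_const (by finiteness))]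
    simp
  rw [h]
  exact continuous_const.add ((integrable_const 1).continuous_primitive 0)

theorem measure_preimage_measureReal_Iic (y : ℝ) :
    ρ ((fun u => ρ.real (Iic u)) ⁻¹' Iic y) = ENNReal.ofReal (min y (ρ.real univ)) := by
  set F := fun u => ρ.real (Iic u)
  have hFm : Monotone F := fun u v huv => measureReal_mono (Iic_subset_Iic.2 huv)
  rcases le_or_gt (ρ.real univ) y with hy | hy
  · have hS : F ⁻¹' Iic y = univ :=
      eq_univ_of_forall fun u => (measureReal_mono (μ := ρ) (subset_univ _)).trans hy
    rw [hS, min_eq_right hy, ofReal_measureReal]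
  set S := F ⁻¹' Iic y
  rw [min_eq_left hy.le]
  obtain ⟨u₀, hu₀⟩ : ∃ u₀, y < F u₀ :=
    (tendsto_measureReal_Iic_atTop.eventually (lt_mem_nhds hy)).exists
  have hSbdd : BddAbove S :=
    ⟨u₀, fun u hu => le_of_not_gt fun h => (hu₀.trans_le (hFm h.le)).not_ge hu⟩
  rcases S.eq_empty_or_nonempty with hS | hS
  · have hy0 : y ≤ 0 := by
      by_contra! hy0
      obtain ⟨u, hu⟩ :=
        ((tendsto_measureReal_Iic_atBot (ρ := ρ)).eventually (gt_mem_nhds hy0)).exists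
      exact hS.subset (show u ∈ S from hu.le)
    rw [hS, measure_empty, ENNReal.ofReal_eq_zero.2 hy0]
  -- `S` is a closed lower set, so it is `Iic (sSup S)`, and right continuity gives `F = y` there.
  have hc : sSup S ∈ S := (isClosed_Iic.preimage continuous_measureReal_Iic).csSup_mem hS hSbdd
  have hSc : S = Iic (sSup S) := Subset.antisymm (fun u hu => le_csSup hSbdd hu)
    fun u hu => (hFm hu).trans hc
  have hFc : F (sSup S) = y := by
    refine le_antisymm hc (ge_of_tendsto (continuous_measureReal_Iic.continuousWithinAt
      (s := Ioi (sSup S))).tendsto ?_)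
    filter_upwards [self_mem_nhdsWithin] with u (hu : sSup S < u)
    exact (not_le.1 fun h => hu.not_ge (le_csSup hSbdd h)).le
  rw [hSc, ← ofReal_measureReal]
  exact congrArg ENNReal.ofReal hFc

theorem map_measureReal_Iic :
    ρ.map (fun u => ρ.real (Iic u)) = volume.restrict (Ioc 0 (ρ.real univ)) := by
  have hF : Measurable fun u => ρ.real (Iic u) := continuous_measureReal_Iic.measurable
  refine ext_of_Iic _ _ fun y => ?_
  rw [map_apply hF measurableSet_Iic, measure_preimage_measureReal_Iic,
    restrict_apply measurableSet_Iic, inter_comm, Ioc_inter_Iic, Real.volume_Ioc, sub_zero,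
    min_comm]

theorem integral_comp_measureReal_Iic {φ : ℝ → ℝ} (hφ : Continuous φ) :
    ∫ u, φ (ρ.real (Iic u)) ∂ρ = ∫ y in 0..ρ.real univ, φ y := by
  rw [intervalIntegral.integral_of_le measureReal_nonneg, ← map_measureReal_Iic,
    integral_map continuous_measureReal_Iic.aemeasurable hφ.aestronglyMeasurable]

end DistributionFunction

theorem nullSingletonClass_restrict {μ : Measure ℝ} {s : Set ℝ} (h : ∀ v ∈ s, μ {v} = 0) :
    NullSingletonClass (μ.restrict s) := ⟨fun v => by
  rw [restrict_apply (measurableSet_singleton v)]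
  by_cases hv : v ∈ s
  · exact measure_mono_null inter_subset_left (h v hv)
  · rw [singleton_inter_eq_empty.2 hv, measure_empty]⟩

theorem restrict_Ioc_restrict_Iic (μ : Measure ℝ) {c u t : ℝ} (hut : u ≤ t) :
    (μ.restrict (Ioc c t)).restrict (Iic u) = μ.restrict (Ioc c u) := by
  rw [restrict_restrict measurableSet_Iic, inter_comm, Ioc_inter_Iic, min_eq_right hut]

theorem restrict_Ioc_eq_of_forall_measure_Ioc_eq {ρ₁ ρ₂ : Measure ℝ} {c t : ℝ}
    (hfin : ρ₁ (Ioc c t) ≠ ∞) (h : ∀ u ∈ Icc c t, ρ₁ (Ioc c u) = ρ₂ (Ioc c u)) :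
    ρ₁.restrict (Ioc c t) = ρ₂.restrict (Ioc c t) := by
  have : IsFiniteMeasure (ρ₁.restrict (Ioc c t)) := isFiniteMeasure_restrict.2 hfin
  refine ext_of_Iic _ _ fun u => ?_
  rw [restrict_apply measurableSet_Iic, restrict_apply measurableSet_Iic, inter_comm,
    Ioc_inter_Iic]
  rcases le_total c (min t u) with hc | hc
  · exact h _ ⟨hc, min_le_left t u⟩
  · simp [Ioc_eq_empty_of_le hc]

end MeasureTheory.Measure

open MeasureTheory.Measure

section ExpPrimitive

variable {m : Measure ℝ} {a : ℝ → ℝ}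

theorem integrable_exp_primitive_smul {E : Type*} [NormedAddCommGroup E] [NormedSpace ℝ E]
    (ha : Integrable a m) (ha0 : 0 ≤ᵐ[m] a) {f : ℝ → E} (hf : Integrable f m) :
    Integrable (fun u => exp (∫ v in Iic u, a v ∂m) • f u) m := by
  have hA : Monotone fun u => ∫ v in Iic u, a v ∂m := fun u v huv =>
    setIntegral_mono_set ha.integrableOn (ae_restrict_of_ae ha0)
      (Iic_subset_Iic.2 huv).eventuallyLE
  refine hf.bdd_smul (exp (∫ u, a u ∂m))
    (continuous_exp.measurable.comp hA.measurable).aestronglyMeasurable (ae_of_all _ fun u => ?_)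
  rw [norm_of_nonneg (exp_pos _).le]
  exact exp_le_exp.2 (setIntegral_le_integral ha ha0)

variable [NullSingletonClass m]

theorem integral_exp_primitive_mul (ha : Integrable a m) (ha0 : 0 ≤ᵐ[m] a) :
    ∫ u, exp (∫ v in Iic u, a v ∂m) * a u ∂m = exp (∫ u, a u ∂m) - 1 := by
  set ρ := m.withDensity fun u => ENNReal.ofReal (a u)
  have : IsFiniteMeasure ρ := isFiniteMeasure_withDensity_ofReal ha.2
  have hρ : ∀ s, MeasurableSet s → ρ.real s = ∫ v in s, a v ∂m := fun s hs => by
    rw [measureReal_def, withDensity_apply _ hs, ← ofReal_integral_eq_lintegral_ofReal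
      ha.integrableOn (ae_restrict_of_ae ha0),
      ENNReal.toReal_ofReal (integral_nonneg_of_ae (ae_restrict_of_ae ha0))]
  have h := integral_comp_measureReal_Iic (ρ := ρ) continuous_exp
  rw [integral_exp, exp_zero, hρ univ MeasurableSet.univ, setIntegral_univ] at h
  rw [← h, integral_withDensity_eq_integral_toReal_smul₀ ha.aemeasurable.ennreal_ofReal
    (ae_of_all _ fun _ => ENNReal.ofReal_lt_top)]
  refine integral_congr_ae ?_
  filter_upwards [ha0] with u hu
  rw [hρ _ measurableSet_Iic, ENNReal.toReal_ofReal hu, smul_eq_mul, mul_comm]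

theorem setIntegral_Iic_exp_primitive_mul (ha : Integrable a m) (ha0 : 0 ≤ᵐ[m] a) (v : ℝ) :
    ∫ u in Iic v, exp (∫ w in Iic u, a w ∂m) * a u ∂m = exp (∫ u in Iic v, a u ∂m) - 1 := by
  rw [← integral_exp_primitive_mul ha.restrict (ae_restrict_of_ae ha0)]
  refine setIntegral_congr_fun measurableSet_Iic fun u hu => ?_
  rw [Measure.restrict_restrict measurableSet_Iic, Iic_inter_Iic, min_eq_left hu]

theorem withDensity_exp_primitive_mul_Iic (ha : Integrable a m) (ha0 : 0 ≤ᵐ[m] a) (v : ℝ) :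
    m.withDensity (fun u => ENNReal.ofReal (exp (∫ w in Iic u, a w ∂m) * a u)) (Iic v)
      = ENNReal.ofReal (exp (∫ u in Iic v, a u ∂m) - 1) := by
  have hEa : Integrable (fun u => exp (∫ w in Iic u, a w ∂m) * a u) m :=
    integrable_exp_primitive_smul ha ha0 ha
  rw [withDensity_apply _ measurableSet_Iic,
    ← ofReal_integral_eq_lintegral_ofReal hEa.integrableOn
      (ae_restrict_of_ae (ha0.mono fun u hu => mul_nonneg (exp_pos _).le hu)),
    setIntegral_Iic_exp_primitive_mul ha ha0]

end ExpPrimitive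

section IntegrationByParts

variable {E : Type*} [NormedAddCommGroup E] [NormedSpace ℝ E] [CompleteSpace E]

theorem integral_smul_integral_eq_integral_Iic_add_integral_Iio (m : Measure ℝ) [SFinite m]
    {b : ℝ → ℝ} {f : ℝ → E} (hb : Integrable b m) (hf : Integrable f m) :
    (∫ u, b u ∂m) • (∫ v, f v ∂m)
      = ∫ u, b u • (∫ v in Iic u, f v ∂m) ∂m + ∫ v, (∫ u in Iio v, b u ∂m) • f v ∂m := by
  have hprod : Integrable (fun z : ℝ × ℝ => b z.1 • f z.2) (m.prod m) := hb.smul_prod hf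
  have hS : MeasurableSet {z : ℝ × ℝ | z.2 ≤ z.1} :=
    measurableSet_le measurable_snd measurable_fst
  rw [← integral_prod_smul, ← integral_add_compl hS hprod, ← integral_indicator hS,
    ← integral_indicator hS.compl, integral_prod _ (hprod.indicator hS),
    integral_prod_symm _ (hprod.indicator hS.compl)]
  congr 1
  · congr 1 with u
    rw [← integral_smul, ← integral_indicator measurableSet_Iic]
    congr 1 with v
  · congr 1 with v
    rw [← integral_smul_const, ← integral_indicator measurableSet_Iio]
    congr 1 with u
    simp only [indicator_apply, mem_compl_iff, mem_ofPred_eq, mem_Iio, not_le]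

variable {m : Measure ℝ} [SFinite m] [NullSingletonClass m]

theorem exp_smul_eq_add_integral_exp_smul {a : ℝ → ℝ} {G S : ℝ → E} (S₀ : E)
    (ha : Integrable a m) (ha0 : 0 ≤ᵐ[m] a) (hG : Integrable G m)
    (haS : Integrable (fun u => a u • S u) m)
    (hS : ∀ᵐ u ∂m, S u = S₀ + ∫ v in Iic u, (G v - a v • S v) ∂m) :
    exp (∫ u, a u ∂m) • (S₀ + ∫ u, (G u - a u • S u) ∂m)
      = S₀ + ∫ u, exp (∫ v in Iic u, a v ∂m) • G u ∂m := by
  set A := fun u => ∫ v in Iic u, a v ∂m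
  set f := fun u => G u - a u • S u
  have hf : Integrable f m := hG.sub haS
  have hEa : Integrable (fun u => exp (A u) * a u) m := integrable_exp_primitive_smul ha ha0 ha
  have hEf : Integrable (fun u => exp (A u) • f u) m := integrable_exp_primitive_smul ha ha0 hf
  have hEaS : Integrable (fun u => exp (A u) • (a u • S u)) m :=
    integrable_exp_primitive_smul ha ha0 haS
  have h_Iic : ∫ u, (exp (A u) * a u) • ∫ v in Iic u, f v ∂m ∂m
      = ∫ u, exp (A u) • (a u • S u) ∂m - (exp (∫ u, a u ∂m) - 1) • S₀ := by
    rw [← integral_exp_primitive_mul ha ha0, ← integral_smul_const,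
      ← integral_sub hEaS (hEa.smul_const _)]
    refine integral_congr_ae ?_
    filter_upwards [hS] with u hu
    rw [hu]
    module
  have h_Iio : ∫ v, (∫ u in Iio v, exp (A u) * a u ∂m) • f v ∂m
      = ∫ v, exp (A v) • f v ∂m - ∫ v, f v ∂m := by
    have h_chain : ∀ v, ∫ u in Iio v, exp (A u) * a u ∂m = exp (A v) - 1 := fun v => by
      rw [setIntegral_congr_set Iio_ae_eq_Iic]
      exact setIntegral_Iic_exp_primitive_mul ha ha0 v
    simp_rw [h_chain, sub_smul, one_smul]
    exact integral_sub hEf hf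
  have h_sum : ∫ u, exp (A u) • (a u • S u) ∂m + ∫ u, exp (A u) • f u ∂m
      = ∫ u, exp (A u) • G u ∂m := by
    rw [← integral_add hEaS hEf]
    simp_rw [f, smul_sub, add_sub_cancel]
  have h := integral_smul_integral_eq_integral_Iic_add_integral_Iio m hEa hf
  rw [integral_exp_primitive_mul ha ha0, h_Iic, h_Iio] at h
  rw [← h_sum]
  linear_combination (norm := module) h

end IntegrationByParts

theorem measure_singleton_eq_zero_of_continuousOn {μ : Measure ℝ} {ℓ : ℝ → ℝ} {T v : ℝ}
    (hℓ : ContinuousOn ℓ (Icc 0 T))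
    (hμ : ∀ a b : ℝ, 0 ≤ a → a ≤ b → b ≤ T → μ (Ioc a b) = ENNReal.ofReal (ℓ b - ℓ a))
    (hv : v ∈ Ioc 0 T) : μ {v} = 0 := by
  have hIoo : Ioo 0 v ∈ 𝓝[<] v := Ioo_mem_nhdsLT hv.1
  have hℓv : Tendsto ℓ (𝓝[<] v) (𝓝 (ℓ v)) :=
    ((hℓ v (Ioc_subset_Icc_self hv)).mono_of_mem_nhdsWithin
      (mem_of_superset hIoo (Ioo_subset_Icc_self.trans (Icc_subset_Icc_right hv.2)))).tendsto
  have hlim : Tendsto (fun u => ENNReal.ofReal (ℓ v - ℓ u)) (𝓝[<] v) (𝓝 0) := by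
    simpa using ENNReal.tendsto_ofReal (hℓv.const_sub (ℓ v))
  refine le_antisymm (ge_of_tendsto hlim ?_) bot_le
  filter_upwards [hIoo] with u hu
  rw [← hμ u v hu.1.le hu.2.le hv.2]
  exact measure_mono (singleton_subset_iff.2 ⟨hu.2, le_rfl⟩)

section StieltjesInterval

variable {μ ν : Measure ℝ} {t : ℝ} [NullSingletonClass (μ.restrict (Ioc 0 t))] {a Y : ℝ → ℝ}

theorem restrict_Ioc_eq_withDensity_exp_primitive_mul (ht : 0 ≤ t)
    (ha : IntegrableOn a (Ioc 0 t) μ) (ha0 : 0 ≤ᵐ[μ.restrict (Ioc 0 t)] a)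
    (hY : ∀ u ∈ Icc 0 t, Y u = exp (∫ v in Ioc 0 u, a v ∂μ))
    (hν : ∀ u ∈ Icc 0 t, ν (Ioc 0 u) = ENNReal.ofReal (Y u - Y 0)) :
    ν.restrict (Ioc 0 t) = (μ.restrict (Ioc 0 t)).withDensity
      fun u => ENNReal.ofReal (exp (∫ v in Iic u, a v ∂μ.restrict (Ioc 0 t)) * a u) := by
  rw [← restrict_withDensity measurableSet_Ioc]
  refine restrict_Ioc_eq_of_forall_measure_Ioc_eq (by simp [hν t ⟨ht, le_rfl⟩]) fun u hu => ?_
  have hY0 : Y 0 = 1 := by simp [hY 0 ⟨le_rfl, hu.1.trans hu.2⟩]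
  rw [hν u hu, withDensity_apply _ measurableSet_Ioc, ← restrict_Ioc_restrict_Iic μ hu.2,
    ← withDensity_apply _ measurableSet_Iic, withDensity_exp_primitive_mul_Iic ha ha0,
    restrict_Ioc_restrict_Iic μ hu.2, ← hY u hu, hY0]

variable {E : Type*} [NormedAddCommGroup E] [NormedSpace ℝ E] [CompleteSpace E]
  [SFinite (μ.restrict (Ioc 0 t))] {G S : ℝ → E}

theorem smul_eq_add_integral_inv_smul (ht : 0 ≤ t) (ha : IntegrableOn a (Ioc 0 t) μ)
    (ha_pos : ∀ u ∈ Ioc 0 t, 0 < a u) (hG : IntegrableOn G (Ioc 0 t) μ)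
    (haS : IntegrableOn (fun u => a u • S u) (Ioc 0 t) μ)
    (hY : ∀ u ∈ Icc 0 t, Y u = exp (∫ v in Ioc 0 u, a v ∂μ))
    (hν : ∀ u ∈ Icc 0 t, ν (Ioc 0 u) = ENNReal.ofReal (Y u - Y 0))
    (hS : ∀ u ∈ Icc 0 t, S u = S 0 + ∫ v in Ioc 0 u, (G v - a v • S v) ∂μ) :
    Y t • S t = S 0 + ∫ u in Ioc 0 t, (a u)⁻¹ • G u ∂ν := by
  have h_ae : ∀ᵐ u ∂μ.restrict (Ioc 0 t), u ∈ Ioc 0 t := ae_restrict_mem measurableSet_Ioc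
  have ha0 : 0 ≤ᵐ[μ.restrict (Ioc 0 t)] a := h_ae.mono fun u hu => (ha_pos u hu).le
  have hS' : ∀ᵐ u ∂μ.restrict (Ioc 0 t),
      S u = S 0 + ∫ v in Iic u, (G v - a v • S v) ∂μ.restrict (Ioc 0 t) := by
    filter_upwards [h_ae] with u hu
    rw [restrict_Ioc_restrict_Iic μ hu.2]
    exact hS u (Ioc_subset_Icc_self hu)
  have hEa : Integrable (fun u => exp (∫ v in Iic u, a v ∂μ.restrict (Ioc 0 t)) * a u)
      (μ.restrict (Ioc 0 t)) := integrable_exp_primitive_smul ha ha0 ha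
  rw [hY t ⟨ht, le_rfl⟩, hS t ⟨ht, le_rfl⟩,
    exp_smul_eq_add_integral_exp_smul (S 0) ha ha0 hG haS hS',
    restrict_Ioc_eq_withDensity_exp_primitive_mul ht ha ha0 hY hν,
    integral_withDensity_eq_integral_toReal_smul₀ hEa.aemeasurable.ennreal_ofReal
      (ae_of_all _ fun _ => ENNReal.ofReal_lt_top)]
  congr 1
  refine integral_congr_ae ?_
  filter_upwards [h_ae] with u hu
  rw [ENNReal.toReal_ofReal (mul_nonneg (exp_pos _).le (ha_pos u hu).le), smul_smul, mul_assoc,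
    mul_inv_cancel₀ (ha_pos u hu).ne', mul_one]

end StieltjesInterval

theorem spin_representation_general (n p : ℕ) (T : ℝ)
    (ℓ : ℝ → ℝ) (hℓc : ContinuousOn ℓ (Set.Icc 0 T))
    (g : EuclideanSpace ℝ (Fin n) → EuclideanSpace ℝ (Fin p)) (hgc : Continuous g)
    (α : EuclideanSpace ℝ (Fin n) → ℝ) (hαc : Continuous α)
    (α₀ : ℝ) (hα₀ : 0 < α₀) (hα : ∀ y, α₀ ≤ α y)
    (x : ℝ → EuclideanSpace ℝ (Fin n)) (hx : ContinuousOn x (Set.Icc 0 T))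
    (μ : Measure ℝ)
    (hμ : ∀ a b : ℝ, 0 ≤ a → a ≤ b → b ≤ T →
      μ (Set.Ioc a b) = ENNReal.ofReal (ℓ b - ℓ a))
    (Y : ℝ → ℝ)
    (hY : ∀ t ∈ Set.Icc (0 : ℝ) T, Y t = Real.exp (∫ u in Set.Ioc 0 t, α (x u) ∂μ))
    (ν : Measure ℝ)
    (hν : ∀ a b : ℝ, 0 ≤ a → a ≤ b → b ≤ T →
      ν (Set.Ioc a b) = ENNReal.ofReal (Y b - Y a))
    (s : ℝ → EuclideanSpace ℝ (Fin p))
    (hsc : ContinuousOn s (Set.Icc 0 T))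
    (hseq : ∀ t ∈ Set.Icc (0 : ℝ) T,
      s t = s 0 + ∫ u in Set.Ioc 0 t, (g (x u) - α (x u) • s u) ∂μ) :
    ∀ t ∈ Set.Icc (0 : ℝ) T,
      s t = (Y t)⁻¹ • s 0 + (Y t)⁻¹ • ∫ u in Set.Ioc 0 t, (α (x u))⁻¹ • g (x u) ∂ν := by
  intro t ht
  have hIcc : ∀ u ∈ Icc 0 t, u ∈ Icc 0 T := fun u hu => ⟨hu.1, hu.2.trans ht.2⟩
  have hμt : μ (Ioc 0 t) ≠ ∞ := by simp [hμ 0 t le_rfl ht.1 ht.2]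
  have : IsFiniteMeasure (μ.restrict (Ioc 0 t)) := isFiniteMeasure_restrict.2 hμt
  have : NullSingletonClass (μ.restrict (Ioc 0 t)) := nullSingletonClass_restrict fun v hv =>
    measure_singleton_eq_zero_of_continuousOn hℓc hμ ⟨hv.1, hv.2.trans ht.2⟩
  have hint {F : Type} [NormedAddCommGroup F] {f : ℝ → F} (hf : ContinuousOn f (Icc 0 T)) :
      IntegrableOn f (Ioc 0 t) μ :=
    hf.integrableOn_of_subset_isCompact isCompact_Icc measurableSet_Ioc
      (Ioc_subset_Icc_self.trans (Icc_subset_Icc_right ht.2)) hμt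
  have key := smul_eq_add_integral_inv_smul (a := fun u => α (x u)) (G := fun u => g (x u)) ht.1
    (hint (hαc.comp_continuousOn hx)) (fun u _ => hα₀.trans_le (hα _))
    (hint (hgc.comp_continuousOn hx)) (hint ((hαc.comp_continuousOn hx).smul hsc))
    (fun u hu => hY u (hIcc u hu)) (fun u hu => hν 0 u le_rfl hu.1 (hIcc u hu).2)
    (fun u hu => hseq u (hIcc u hu))
  rw [← smul_add, ← key, inv_smul_smul₀ (hY t ht ▸ exp_pos _).ne']

/-- Pathwise representation formula for the spin process (Lemma 2.3): if `s` is a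
continuous BV solution of `s t = s 0 + ∫₀ᵗ (g(x u) − α(x u) s u) dℓ(u)` and
`Y t = exp (∫₀ᵗ α(x u) dℓ(u))`, then
`s t = Y t⁻¹ • s 0 + Y t⁻¹ • ∫₀ᵗ (g(x u)/α(x u)) dY(u)`.
Here `μ` and `ν` are the Lebesgue–Stieltjes measures of `ℓ` and `Y`. -/
theorem spin_representation (n p : ℕ) (T : ℝ) (hT : 0 < T)
    (ℓ : ℝ → ℝ) (hℓc : ContinuousOn ℓ (Set.Icc 0 T)) (hℓm : MonotoneOn ℓ (Set.Icc 0 T))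
    (hℓ0 : ℓ 0 = 0)
    (g : EuclideanSpace ℝ (Fin n) → EuclideanSpace ℝ (Fin p)) (hgc : Continuous g)
    (α : EuclideanSpace ℝ (Fin n) → ℝ) (hαc : Continuous α)
    (α₀ : ℝ) (hα₀ : 0 < α₀) (hα : ∀ y, α₀ ≤ α y)
    (x : ℝ → EuclideanSpace ℝ (Fin n)) (hx : ContinuousOn x (Set.Icc 0 T))
    (μ : Measure ℝ)
    (hμ : ∀ a b : ℝ, 0 ≤ a → a ≤ b → b ≤ T →
      μ (Set.Ioc a b) = ENNReal.ofReal (ℓ b - ℓ a))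
    (Y : ℝ → ℝ)
    (hY : ∀ t ∈ Set.Icc (0 : ℝ) T, Y t = Real.exp (∫ u in Set.Ioc 0 t, α (x u) ∂μ))
    (ν : Measure ℝ)
    (hν : ∀ a b : ℝ, 0 ≤ a → a ≤ b → b ≤ T →
      ν (Set.Ioc a b) = ENNReal.ofReal (Y b - Y a))
    (s : ℝ → EuclideanSpace ℝ (Fin p))
    (hsc : ContinuousOn s (Set.Icc 0 T))
    (hsbv : BoundedVariationOn s (Set.Icc 0 T))
    (hseq : ∀ t ∈ Set.Icc (0 : ℝ) T,
      s t = s 0 + ∫ u in Set.Ioc 0 t, (g (x u) - α (x u) • s u) ∂μ) :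
    ∀ t ∈ Set.Icc (0 : ℝ) T,
      s t = (Y t)⁻¹ • s 0 + (Y t)⁻¹ • ∫ u in Set.Ioc 0 t, (α (x u))⁻¹ • g (x u) ∂ν :=
  spin_representation_general n p T ℓ hℓc g hgc α hαc α₀ hα₀ hα x hx μ hμ Y hY ν hν s hsc hseq
end

section
/- Let g₁, …, g_{p+1} ∈ ℝᵖ satisfy: every y ∈ ℝᵖ is a nonnegative combination of g₁,…,g_{p+1}. Then for every ε > 0, the set U_ε = { Σⱼ ηⱼ gⱼ : ηⱼ ≥ 0, Σⱼ ηⱼ < ε } is an open neighborhood of 0 in ℝᵖ. -/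
/-!
`U_ε` is convex, and it is absorbing because the `g j` positively span the space. In finite
dimension a convex absorbing set has nonempty interior (its affine span is everything), and `0`
lies strictly between an interior point `x` and a point of the set on the ray through `-x`, so
`U_ε` is a neighbourhood of `0`. Openness follows since weights add: a point `x` of `U_ε` with
total weight `s < ε` has the neighbourhood `x + U_{(ε - s)/2}` inside `U_ε`.
-/

open Finset Topology

theorem Convex.mem_nhds_zero_of_forall_exists_smul_mem {E : Type*} [NormedAddCommGroup E]
    [NormedSpace ℝ E] [FiniteDimensional ℝ E] {s : Set E} (hs : Convex ℝ s)
    (habs : ∀ x, ∃ t > (0 : ℝ), t • x ∈ s) : s ∈ 𝓝 (0 : E) := by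
  have hzero : (0 : E) ∈ s := by
    obtain ⟨t, -, ht0⟩ := habs 0
    simpa using ht0
  have hspan : affineSpan ℝ s = ⊤ := by
    refine eq_top_iff.mpr fun x _ => ?_
    obtain ⟨t, ht, htx⟩ := habs x
    have := AffineMap.lineMap_mem t⁻¹ (mem_affineSpan ℝ hzero) (mem_affineSpan ℝ htx)
    simpa [AffineMap.lineMap_apply_module', smul_smul, inv_mul_cancel₀ ht.ne'] using this
  obtain ⟨x, hx⟩ := hs.interior_nonempty_iff_affineSpan_eq_top.mpr hspan
  obtain ⟨t, ht, htx⟩ := habs (-x)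
  have hcombo : (t / (1 + t)) • x + (1 / (1 + t)) • t • -x = 0 := by
    rw [smul_smul, smul_neg, ← sub_eq_add_neg, ← sub_smul, one_div_mul_eq_div, sub_self, zero_smul]
  rw [← mem_interior_iff_mem_nhds, ← hcombo]
  exact hs.combo_interior_self_mem_interior hx htx (by positivity) (by positivity)
    (by field_simp; ring)

/-- The set `U_ε` of the paper. -/
def conicCombinationsLT {ι E : Type*} [Fintype ι] [AddCommMonoid E] [Module ℝ E]
    (g : ι → E) (ε : ℝ) : Set E :=
  {y | ∃ η : ι → ℝ, (∀ j, 0 ≤ η j) ∧ ∑ j, η j < ε ∧ y = ∑ j, η j • g j}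

section conicCombinationsLT

variable {ι E : Type*} [Fintype ι] [AddCommGroup E] [Module ℝ E] {g : ι → E} {ε δ : ℝ}

theorem zero_mem_conicCombinationsLT (hε : 0 < ε) : (0 : E) ∈ conicCombinationsLT g ε :=
  ⟨0, fun _ => le_rfl, by simpa using hε, by simp⟩

theorem add_mem_conicCombinationsLT {x y : E} (hx : x ∈ conicCombinationsLT g ε)
    (hy : y ∈ conicCombinationsLT g δ) : x + y ∈ conicCombinationsLT g (ε + δ) := by
  obtain ⟨η, hη, hηε, rfl⟩ := hx
  obtain ⟨θ, hθ, hθδ, rfl⟩ := hy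
  refine ⟨η + θ, fun j => add_nonneg (hη j) (hθ j), ?_, ?_⟩
  · simpa [sum_add_distrib] using add_lt_add hηε hθδ
  · simp [add_smul, sum_add_distrib]

theorem convex_conicCombinationsLT : Convex ℝ (conicCombinationsLT g ε) := by
  refine convex_iff_forall_pos.mpr ?_
  rintro _ ⟨η, hη, hηε, rfl⟩ _ ⟨θ, hθ, hθε, rfl⟩ a b ha hb hab
  refine ⟨a • η + b • θ, fun j => ?_, ?_, ?_⟩
  · have := hη j
    have := hθ j
    simp only [Pi.add_apply, Pi.smul_apply, smul_eq_mul]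
    positivity
  · calc ∑ j, (a • η + b • θ) j = a * ∑ j, η j + b * ∑ j, θ j := by
          simp [sum_add_distrib, mul_sum]
      _ < a * ε + b * ε := by gcongr
      _ = ε := by rw [← add_mul, hab, one_mul]
  · simp [add_smul, sum_add_distrib, smul_sum, smul_smul]

theorem exists_smul_mem_conicCombinationsLT {y : E}
    (hy : ∃ lam : ι → ℝ, (∀ j, 0 ≤ lam j) ∧ y = ∑ j, lam j • g j) (hε : 0 < ε) :
    ∃ t > (0 : ℝ), t • y ∈ conicCombinationsLT g ε := by
  obtain ⟨lam, hlam, rfl⟩ := hy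
  set m := ∑ j, lam j
  have hm : 0 ≤ m := sum_nonneg fun j _ => hlam j
  have hm1 : 0 < m + 1 := by linarith
  refine ⟨ε / (m + 1), by positivity, (ε / (m + 1)) • lam, fun j => ?_, ?_, ?_⟩
  · simp only [Pi.smul_apply, smul_eq_mul]
    exact mul_nonneg (by positivity) (hlam j)
  · calc ∑ j, ((ε / (m + 1)) • lam) j = ε * (m / (m + 1)) := by
          simp only [Pi.smul_apply, smul_eq_mul, ← mul_sum]; ring
      _ < ε * 1 := by gcongr; rw [div_lt_one hm1]; linarith
      _ = ε := mul_one ε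
  · simp [smul_sum, smul_smul]

end conicCombinationsLT

section Topology

variable {ι E : Type*} [Fintype ι] [NormedAddCommGroup E] [NormedSpace ℝ E]
  [FiniteDimensional ℝ E] {g : ι → E}

theorem conicCombinationsLT_mem_nhds_zero
    (hg : ∀ y : E, ∃ lam : ι → ℝ, (∀ j, 0 ≤ lam j) ∧ y = ∑ j, lam j • g j) {ε : ℝ}
    (hε : 0 < ε) : conicCombinationsLT g ε ∈ 𝓝 0 :=
  convex_conicCombinationsLT.mem_nhds_zero_of_forall_exists_smul_mem fun y =>
    exists_smul_mem_conicCombinationsLT (hg y) hε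

theorem isOpen_conicCombinationsLT
    (hg : ∀ y : E, ∃ lam : ι → ℝ, (∀ j, 0 ≤ lam j) ∧ y = ∑ j, lam j • g j) (ε : ℝ) :
    IsOpen (conicCombinationsLT g ε) := by
  refine isOpen_iff_mem_nhds.mpr fun x hx => ?_
  obtain ⟨η, hη, hηε, hxη⟩ := hx
  set δ := (ε - ∑ j, η j) / 2 with hδ
  have hx : x ∈ conicCombinationsLT g (ε - δ) := ⟨η, hη, by linarith, hxη⟩
  rw [← map_add_left_nhds_zero x, Filter.mem_map]
  refine Filter.mem_of_superset (conicCombinationsLT_mem_nhds_zero hg (ε := δ) (by linarith)) ?_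
  intro y hy
  simpa using add_mem_conicCombinationsLT hx hy

end Topology

/-- Lemma 3.1: under assumption A1, the set
`U_ε = { Σⱼ ηⱼ gⱼ : ηⱼ ≥ 0, Σⱼ ηⱼ < ε }` is an open neighborhood of `0`. -/
theorem Ueps_open_nbhd_of_zero (p : ℕ)
    (g : Fin (p + 1) → EuclideanSpace ℝ (Fin p))
    (hA1 : ∀ y : EuclideanSpace ℝ (Fin p),
      ∃ lam : Fin (p + 1) → ℝ, (∀ j, 0 ≤ lam j) ∧ y = ∑ j, lam j • g j) :
    ∀ ε > 0,
      IsOpen {y : EuclideanSpace ℝ (Fin p) | ∃ η : Fin (p + 1) → ℝ,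
        (∀ j, 0 ≤ η j) ∧ (∑ j, η j) < ε ∧ y = ∑ j, η j • g j} ∧
      (0 : EuclideanSpace ℝ (Fin p)) ∈ {y : EuclideanSpace ℝ (Fin p) | ∃ η : Fin (p + 1) → ℝ,
        (∀ j, 0 ≤ η j) ∧ (∑ j, η j) < ε ∧ y = ∑ j, η j • g j} :=
  fun ε hε => ⟨isOpen_conicCombinationsLT hA1 ε, zero_mem_conicCombinationsLT hε⟩
end

section
/- Let g₁, …, g_p be linearly independent vectors in ℝᵖ, and let α₁, …, α_p > 0. Define v : (0,1]ᵖ → ℝᵖ by v(t₁,…,t_p) = Σ_{j=1}^p exp(−Σ_{k=j}^p α_k t_k) · (g_j/α_j) · (exp(α_j t_j) − 1). Then the Jacobian determinant of v satisfies det Dv(t₁,…,t_p) = C · exp(−Σ_{k=1}^p k α_k t_k), where C = det[g₁ | ⋯ | g_p] ≠ 0 is independent of (t₁,…,t_p). -/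
/-!
The coefficient of `gⱼ` depends only on `tⱼ, …, t_p`, so writing `v = T_g ∘ c` with
`T_g = [g₁ | ⋯ | g_p]` the Jacobian matrix of `c` is upper triangular. Since
`exp(−Σ_{k ≥ j} αₖ tₖ) (exp(αⱼ tⱼ) − 1) = exp(−Σ_{k > j} αₖ tₖ) − exp(−Σ_{k ≥ j} αₖ tₖ)`,
its diagonal entries are `exp(−Σ_{k ≥ j} αₖ tₖ)`, whose product is `exp(−Σₖ k αₖ tₖ)`.
-/

open Finset Matrix Real

namespace ContinuousLinearMap

variable {ι : Type*}

def weightedCoordSum (S : Finset ι) (a : ι → ℝ) : (ι → ℝ) →L[ℝ] ℝ :=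
  ∑ k ∈ S, a k • proj k

lemma weightedCoordSum_apply (S : Finset ι) (a s : ι → ℝ) :
    weightedCoordSum S a s = ∑ k ∈ S, a k * s k := by
  simp [weightedCoordSum]

lemma weightedCoordSum_apply_single [DecidableEq ι] (S : Finset ι) (a : ι → ℝ) (m : ι) :
    weightedCoordSum S a (Pi.single m 1) = if m ∈ S then a m else 0 := by
  simp [weightedCoordSum_apply, Pi.single_apply]

end ContinuousLinearMap

open ContinuousLinearMap

lemma det_fderiv_sum_smul {ι : Type*} [Fintype ι] [DecidableEq ι] {c : ι → (ι → ℝ) → ℝ}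
    {D : ι → (ι → ℝ) →L[ℝ] ℝ} {t : ι → ℝ} (hc : ∀ j, HasFDerivAt (c j) (D j) t)
    (g : ι → ι → ℝ) :
    LinearMap.det (fderiv ℝ (fun s => ∑ j, c j s • g j) t).toLinearMap =
      (of fun i j => g j i).det * (of fun j m => D j (Pi.single m 1)).det := by
  have hv : HasFDerivAt (fun s => ∑ j, c j s • g j) (∑ j, (D j).smulRight (g j)) t :=
    HasFDerivAt.fun_sum fun j _ => (hc j).smul_const (g j)
  have hmat : LinearMap.toMatrix' (∑ j, (D j).smulRight (g j)).toLinearMap =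
      (of fun i j => g j i) * of fun j m => D j (Pi.single m 1) := by
    ext i m
    simp [LinearMap.toMatrix'_apply, Matrix.mul_apply, mul_comm]
  rw [hv.fderiv, ← LinearMap.det_toMatrix', hmat, det_mul]

lemma Fin.sum_sum_Ici {M : Type*} [AddCommMonoid M] {p : ℕ} (f : Fin p → M) :
    ∑ j, ∑ k ∈ Ici j, f k = ∑ k, (k.val + 1) • f k := by
  rw [sum_comm' (t' := univ) (s' := Iic) (by simp)]
  simp [Fin.card_Iic]

section

variable {p : ℕ} (α : Fin p → ℝ)

noncomputable def spinCoeff (j : Fin p) (s : Fin p → ℝ) : ℝ :=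
  exp (-(∑ k ∈ Ici j, α k * s k)) / α j * (exp (α j * s j) - 1)

lemma spinCoeff_eq_sub (j : Fin p) :
    spinCoeff α j = fun s => (exp (-weightedCoordSum (Ioi j) α s) -
      exp (-weightedCoordSum (Ici j) α s)) / α j := by
  ext s
  simp only [spinCoeff, weightedCoordSum_apply, Ici_eq_cons_Ioi, sum_cons, neg_add, exp_add,
    exp_neg (α j * s j)]
  field_simp

noncomputable def spinCoeffDeriv (j : Fin p) (t : Fin p → ℝ) : (Fin p → ℝ) →L[ℝ] ℝ :=
  (α j)⁻¹ • (exp (-weightedCoordSum (Ici j) α t) • weightedCoordSum (Ici j) α -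
    exp (-weightedCoordSum (Ioi j) α t) • weightedCoordSum (Ioi j) α)

lemma hasFDerivAt_spinCoeff (j : Fin p) (t : Fin p → ℝ) :
    HasFDerivAt (spinCoeff α j) (spinCoeffDeriv α j t) t := by
  have h := (((weightedCoordSum (Ioi j) α).hasFDerivAt (x := t)).neg.exp.sub
    ((weightedCoordSum (Ici j) α).hasFDerivAt (x := t)).neg.exp).mul_const (α j)⁻¹
  rw [spinCoeff_eq_sub]
  simp only [div_eq_mul_inv]
  refine h.congr_fderiv ?_
  ext v
  simp only [spinCoeffDeriv, _root_.smul_apply, _root_.sub_apply,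
    _root_.add_apply, _root_.neg_apply, Pi.neg_apply, smul_neg,
    sub_neg_eq_add, smul_add, smul_eq_mul]
  ring

lemma spinCoeffDeriv_isUpperTriangular (t : Fin p → ℝ) :
    (of fun j m => spinCoeffDeriv α j t (Pi.single m 1)).IsUpperTriangular := by
  intro j m (hmj : m < j)
  simp [spinCoeffDeriv, weightedCoordSum_apply_single, hmj.not_ge, hmj.not_gt]

lemma spinCoeffDeriv_apply_single_self {j : Fin p} (hαj : α j ≠ 0) (t : Fin p → ℝ) :
    spinCoeffDeriv α j t (Pi.single j 1) = exp (-(∑ k ∈ Ici j, α k * t k)) := by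
  simp only [spinCoeffDeriv, _root_.smul_apply, _root_.sub_apply,
    weightedCoordSum_apply_single, mem_Ici, le_refl, mem_Ioi, lt_self_iff_false, if_true, if_false,
    smul_eq_mul, mul_zero, sub_zero]
  rw [weightedCoordSum_apply]
  field_simp [hαj]

end

theorem jacobian_det_general (p : ℕ) (g : Fin p → (Fin p → ℝ))
    (hg : LinearIndependent ℝ g)
    (α : Fin p → ℝ) (hα : ∀ j, 0 < α j)
    (v : (Fin p → ℝ) → (Fin p → ℝ))
    (hv : ∀ t, v t = ∑ j,
      (Real.exp (-(∑ k ∈ Finset.Ici j, α k * t k)) / α j *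
        (Real.exp (α j * t j) - 1)) • g j)
    (t : Fin p → ℝ) :
    LinearMap.det ((fderiv ℝ v t).toLinearMap) =
        (Matrix.of fun i j => g j i).det *
          Real.exp (-(∑ k : Fin p, ((k.val + 1 : ℕ) : ℝ) * (α k * t k))) ∧
      (Matrix.of fun i j => g j i).det ≠ 0 := by
  have hv' : v = fun s => ∑ j, spinCoeff α j s • g j := funext hv
  refine ⟨?_, ?_⟩
  · rw [hv', det_fderiv_sum_smul (hasFDerivAt_spinCoeff α · t),
      det_of_isUpperTriangular (spinCoeffDeriv_isUpperTriangular α t)]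
    simp only [of_apply, fun j => spinCoeffDeriv_apply_single_self α (hα j).ne' t,
      ← exp_sum, sum_neg_distrib, Fin.sum_sum_Ici, nsmul_eq_mul]
  · exact ((isUnit_iff_isUnit_det _).mp (linearIndependent_cols_iff_isUnit.mp hg)).ne_zero

/-- Lemma 3.9 (Jacobian computation): for `v(t) = Σⱼ exp(−Σ_{k≥j} αₖ tₖ) (gⱼ/αⱼ)
(exp(αⱼ tⱼ) − 1)` with `g₁,…,g_p` linearly independent and `αⱼ > 0`, the Jacobian
determinant is `det[g₁|⋯|g_p] · exp(−Σₖ k αₖ tₖ)`, with nonzero constant. -/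
theorem jacobian_det (p : ℕ) (g : Fin p → (Fin p → ℝ))
    (hg : LinearIndependent ℝ g)
    (α : Fin p → ℝ) (hα : ∀ j, 0 < α j)
    (v : (Fin p → ℝ) → (Fin p → ℝ))
    (hv : ∀ t, v t = ∑ j,
      (Real.exp (-(∑ k ∈ Finset.Ici j, α k * t k)) / α j *
        (Real.exp (α j * t j) - 1)) • g j)
    (t : Fin p → ℝ) (ht : ∀ k, t k ∈ Set.Ioc (0 : ℝ) 1) :
    LinearMap.det ((fderiv ℝ v t).toLinearMap) =
        (Matrix.of fun i j => g j i).det *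
          Real.exp (-(∑ k : Fin p, ((k.val + 1 : ℕ) : ℝ) * (α k * t k))) ∧
      (Matrix.of fun i j => g j i).det ≠ 0 :=
  jacobian_det_general p g hg α hα v hv t
end

section
/- Let α, β > 0 and a(s) = (2/(α+β)) · (s − (α−β)/2)/√((α−s)(β+s)), b(s) = 1/√((α−s)(β+s)) for s ∈ (−β, α). Then the function ρ(y,s) = a(s)y + b(s) is integrable on [−1,1] × (−β, α) (with respect to 2-dimensional Lebesgue measure), even though ρ(y,s) → ∞ as (y,s) → (1,α) and as (y,s) → (−1,−β). -/
/-!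
In the coordinate `t = (2s - (α - β)) / (α + β)`, which maps `[-β, α]` onto `[-1, 1]`, the density
is `ρ(y, s) = (t y + 1) / √((α - s)(β + s))`. The numerator is bounded by `2`, and
`s ↦ 1 / √((α - s)(β + s))` is integrable on `(-β, α)` since it is the derivative of the bounded
increasing function `arcsin t`. At the corners `(1, α)` and `(-1, -β)` the numerator tends to `2`
while the denominator tends to `0⁺`.
-/

open MeasureTheory Filter Set Topology

namespace Wristband

noncomputable def affineCoord (α β s : ℝ) : ℝ := 2 / (α + β) * (s - (α - β) / 2)

noncomputable def density (α β : ℝ) (z : ℝ × ℝ) : ℝ :=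
  2 / (α + β) * (z.2 - (α - β) / 2) / Real.sqrt ((α - z.2) * (β + z.2)) * z.1 +
    1 / Real.sqrt ((α - z.2) * (β + z.2))

variable {α β : ℝ}

lemma one_sub_affineCoord_sq (hαβ : α + β ≠ 0) (s : ℝ) :
    1 - affineCoord α β s ^ 2 = (2 / (α + β)) ^ 2 * ((α - s) * (β + s)) := by
  unfold affineCoord
  field_simp
  ring

lemma affineCoord_self (hαβ : α + β ≠ 0) : affineCoord α β α = 1 := by
  unfold affineCoord
  field_simp
  ring

lemma affineCoord_neg (hαβ : α + β ≠ 0) : affineCoord α β (-β) = -1 := by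
  unfold affineCoord
  field_simp
  ring

lemma abs_affineCoord_le_one {s : ℝ} (hs : s ∈ Icc (-β) α) : |affineCoord α β s| ≤ 1 := by
  rcases eq_or_ne (α + β) 0 with hαβ | hαβ
  · simp [affineCoord, hαβ]
  have : 0 ≤ 1 - affineCoord α β s ^ 2 := by
    rw [one_sub_affineCoord_sq hαβ]
    exact mul_nonneg (sq_nonneg _) (mul_nonneg (by linarith [hs.2]) (by linarith [hs.1]))
  exact abs_le_one_iff_mul_self_le_one.2 (by nlinarith)

lemma density_eq (z : ℝ × ℝ) :
    density α β z =
      (affineCoord α β z.2 * z.1 + 1) * (Real.sqrt ((α - z.2) * (β + z.2)))⁻¹ := by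
  rw [density, affineCoord, div_mul_eq_mul_div, ← add_div, div_eq_mul_inv]

lemma hasDerivAt_arcsin_affineCoord {s : ℝ} (hs : s ∈ Ioo (-β) α) :
    HasDerivAt (fun s ↦ Real.arcsin (affineCoord α β s))
      (Real.sqrt ((α - s) * (β + s)))⁻¹ s := by
  have hαβ : 0 < α + β := by linarith [hs.1, hs.2]
  have hcoord : HasDerivAt (affineCoord α β) (2 / (α + β)) s := by
    have := ((hasDerivAt_id s).sub_const ((α - β) / 2)).const_mul (2 / (α + β))
    rwa [mul_one] at this
  have hlt : affineCoord α β s ^ 2 < 1 := by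
    nlinarith [one_sub_affineCoord_sq hαβ.ne' s, pow_pos (div_pos two_pos hαβ) 2,
      mul_pos (sub_pos.2 hs.2) (neg_lt_iff_pos_add'.1 hs.1)]
  have hne : affineCoord α β s ≠ -1 ∧ affineCoord α β s ≠ 1 := by
    constructor <;> rintro h <;> rw [h] at hlt <;> norm_num at hlt
  refine ((Real.hasDerivAt_arcsin hne.1 hne.2).comp s hcoord).congr_deriv ?_
  rw [one_sub_affineCoord_sq hαβ.ne', Real.sqrt_mul (sq_nonneg _), Real.sqrt_sq (by positivity)]
  field_simp

lemma integrableOn_inv_sqrt :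
    IntegrableOn (fun s ↦ (Real.sqrt ((α - s) * (β + s)))⁻¹) (Ioo (-β) α) := by
  rcases le_or_gt α (-β) with h | h
  · simp [Ioo_eq_empty_of_le h]
  have hcont : ContinuousOn (fun s ↦ Real.arcsin (affineCoord α β s)) (Icc (-β) α) :=
    (Real.continuous_arcsin.comp (by unfold affineCoord; fun_prop)).continuousOn
  exact (intervalIntegral.integrableOn_deriv_of_nonneg hcont
    (fun s hs ↦ hasDerivAt_arcsin_affineCoord hs) (fun s _ ↦ by positivity)).mono_set
    Ioo_subset_Ioc_self

lemma abs_density_le {z : ℝ × ℝ} (hz : z ∈ Icc (-1) 1 ×ˢ Ioo (-β) α) :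
    |density α β z| ≤ 2 * (Real.sqrt ((α - z.2) * (β + z.2)))⁻¹ := by
  have hy : |z.1| ≤ 1 := abs_le.2 hz.1
  have ht : |affineCoord α β z.2| ≤ 1 := abs_affineCoord_le_one (Ioo_subset_Icc_self hz.2)
  have hnum : |affineCoord α β z.2 * z.1 + 1| ≤ 2 :=
    calc |affineCoord α β z.2 * z.1 + 1| ≤ |affineCoord α β z.2| * |z.1| + 1 := by
          simpa [abs_mul] using abs_add_le (affineCoord α β z.2 * z.1) 1
      _ ≤ 2 := by nlinarith [abs_nonneg (affineCoord α β z.2)]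
  rw [density_eq, abs_mul, abs_of_nonneg (inv_nonneg.2 (Real.sqrt_nonneg _))]
  exact mul_le_mul_of_nonneg_right hnum (by positivity)

theorem integrableOn_density : IntegrableOn (density α β) (Icc (-1) 1 ×ˢ Ioo (-β) α) := by
  have hdom : IntegrableOn (fun z : ℝ × ℝ ↦ 2 * (Real.sqrt ((α - z.2) * (β + z.2)))⁻¹)
      (Icc (-1) 1 ×ˢ Ioo (-β) α) := by
    rw [IntegrableOn, Measure.volume_eq_prod, ← Measure.prod_restrict]
    exact (integrableOn_inv_sqrt.const_mul 2).comp_snd _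
  refine hdom.mono' (Measurable.aestronglyMeasurable (by unfold density; fun_prop)) ?_
  rw [ae_restrict_iff' (measurableSet_Icc.prod measurableSet_Ioo)]
  exact ae_of_all _ fun z hz ↦ abs_density_le hz

theorem tendsto_density_atTop {p : ℝ × ℝ} (hp : (α - p.2) * (β + p.2) = 0)
    (hnum : 0 < affineCoord α β p.2 * p.1 + 1) :
    Tendsto (density α β) (𝓝[univ ×ˢ Ioo (-β) α] p) atTop := by
  have hsqrt : Tendsto (fun z : ℝ × ℝ ↦ Real.sqrt ((α - z.2) * (β + z.2)))
      (𝓝[univ ×ˢ Ioo (-β) α] p) (𝓝[>] 0) := by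
    refine tendsto_nhdsWithin_iff.2 ⟨?_, ?_⟩
    · simpa [hp] using ((by fun_prop : Continuous fun z : ℝ × ℝ ↦
        Real.sqrt ((α - z.2) * (β + z.2))).tendsto p).mono_left nhdsWithin_le_nhds
    · filter_upwards [self_mem_nhdsWithin] with z hz
      exact Real.sqrt_pos.2 (mul_pos (by linarith [hz.2.2]) (by linarith [hz.2.1]))
  have hlin : Tendsto (fun z : ℝ × ℝ ↦ affineCoord α β z.2 * z.1 + 1)
      (𝓝[univ ×ˢ Ioo (-β) α] p) (𝓝 (affineCoord α β p.2 * p.1 + 1)) :=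
    ((by unfold affineCoord; fun_prop :
      Continuous fun z : ℝ × ℝ ↦ affineCoord α β z.2 * z.1 + 1).tendsto p).mono_left
      nhdsWithin_le_nhds
  exact (hlin.pos_mul_atTop hnum hsqrt.inv_tendsto_nhdsGT_zero).congr fun z ↦ (density_eq z).symm

end Wristband

/-- The wristband stationary density `ρ(y,s) = a(s) y + b(s)` is integrable on
`[−1,1] × (−β,α)` even though it blows up at the corners `(1,α)` and `(−1,−β)`. -/
theorem wristband_density_integrable (α β : ℝ) (hα : 0 < α) (hβ : 0 < β) :
    IntegrableOn
        (fun z : ℝ × ℝ =>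
          (2 / (α + β)) * (z.2 - (α - β) / 2) / Real.sqrt ((α - z.2) * (β + z.2)) * z.1 +
            1 / Real.sqrt ((α - z.2) * (β + z.2)))
        (Set.Icc (-1 : ℝ) 1 ×ˢ Set.Ioo (-β) α) volume ∧
      Filter.Tendsto
        (fun z : ℝ × ℝ =>
          (2 / (α + β)) * (z.2 - (α - β) / 2) / Real.sqrt ((α - z.2) * (β + z.2)) * z.1 +
            1 / Real.sqrt ((α - z.2) * (β + z.2)))
        (nhdsWithin ((1 : ℝ), α) (Set.Ioo (-1 : ℝ) 1 ×ˢ Set.Ioo (-β) α)) Filter.atTop ∧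
      Filter.Tendsto
        (fun z : ℝ × ℝ =>
          (2 / (α + β)) * (z.2 - (α - β) / 2) / Real.sqrt ((α - z.2) * (β + z.2)) * z.1 +
            1 / Real.sqrt ((α - z.2) * (β + z.2)))
        (nhdsWithin ((-1 : ℝ), -β) (Set.Ioo (-1 : ℝ) 1 ×ˢ Set.Ioo (-β) α)) Filter.atTop := by
  have hαβ : α + β ≠ 0 := (add_pos hα hβ).ne'
  have hwithin (p : ℝ × ℝ) : 𝓝[Ioo (-1) 1 ×ˢ Ioo (-β) α] p ≤ 𝓝[univ ×ˢ Ioo (-β) α] p :=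
    nhdsWithin_mono p (prod_mono (subset_univ _) subset_rfl)
  refine ⟨Wristband.integrableOn_density, ?_, ?_⟩
  · refine (Wristband.tendsto_density_atTop (p := (1, α)) (by ring) ?_).mono_left (hwithin _)
    norm_num [Wristband.affineCoord_self hαβ]
  · refine (Wristband.tendsto_density_atTop (p := (-1, -β)) (by ring) ?_).mono_left (hwithin _)
    norm_num [Wristband.affineCoord_neg hαβ]
end

section
/- Let α, β > 0, let a(s), b(s) be as in the wristband example, ρ(y,s) = a(s)y + b(s) on G = (−1,1)×(−β,α), and let g(y) = α·1_{y=1} − β·1_{y=−1}. Then for every f ∈ C²(closure G) satisfying the oblique boundary inequality (g(y) − s)·∂_s f(y,s) ≥ sgn(y)·∂_y f(y,s) at y = ±1 for all s ∈ (−β,α), one has ∫_G ∂_{yy} f(y,s) ρ(y,s) dy ds ≤ 0. -/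
open MeasureTheory Set intervalIntegral

/-!
Since `ρ(y, s) = a(s) y + b(s)` is affine in `y`, integrating by parts in `y` turns
`∫ ∂_yy f ρ dy` into `ρ(1,s) ∂_y f(1,s) - ρ(-1,s) ∂_y f(-1,s) - a(s) (f(1,s) - f(-1,s))`.
With `q(s) = √((α - s)(β + s))` one has `ρ(1,s)(α - s) = ρ(-1,s)(β + s) = (2/(α+β)) q(s)`,
so both weights are positive and the oblique boundary inequality bounds the boundary terms by
`(2/(α+β)) q(s) (∂_s f(1,s) - ∂_s f(-1,s))`. Since `(2/(α+β)) q' = -a`, the resulting bound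
is the `s`-derivative of the flux `(2/(α+β)) q(s) (f(1,s) - f(-1,s))`, which vanishes at `s = -β`
and `s = α`; its integral over `(-β, α)` is therefore `0`. Integrability comes from `|a| ≤ b`
and `b(s) = d/ds arcsin((2s - α + β)/(α + β))`.
-/

theorem setIntegral_prod_le_of_setIntegral_le {X Y : Type*} [MeasurableSpace X]
    [MeasurableSpace Y] {μ : Measure X} {ν : Measure Y} [SFinite μ] [SFinite ν] {S : Set X}
    {T : Set Y} {F : X × Y → ℝ} {g : Y → ℝ} (hF : IntegrableOn F (S ×ˢ T) (μ.prod ν))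
    (hg : IntegrableOn g T ν) (hT : MeasurableSet T)
    (hle : ∀ y ∈ T, ∫ x in S, F (x, y) ∂μ ≤ g y) :
    ∫ z in S ×ˢ T, F z ∂μ.prod ν ≤ ∫ y in T, g y ∂ν := by
  rw [IntegrableOn, ← Measure.prod_restrict] at hF
  rw [← Measure.prod_restrict, integral_prod_symm _ hF]
  exact setIntegral_mono_on hF.integral_prod_right hg hT hle

theorem integral_affine_mul_deriv_deriv {g g' g'' : ℝ → ℝ} {u v : ℝ} (p c : ℝ)
    (hg : ∀ y ∈ uIcc u v, HasDerivAt g (g' y) y)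
    (hg' : ∀ y ∈ uIcc u v, HasDerivAt g' (g'' y) y)
    (hg'' : IntervalIntegrable g'' volume u v) :
    ∫ y in u..v, (p * y + c) * g'' y =
      (p * v + c) * g' v - (p * u + c) * g' u - p * (g v - g u) := by
  have hlin : ∀ y ∈ uIcc u v, HasDerivAt (fun y => p * y + c) p y := fun y _ => by
    simpa using ((hasDerivAt_id y).const_mul p).add_const c
  have hg'int : IntervalIntegrable g' volume u v :=
    ContinuousOn.intervalIntegrable fun y hy => (hg' y hy).continuousAt.continuousWithinAt
  rw [integral_mul_deriv_eq_deriv_mul hlin hg' intervalIntegrable_const hg'',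
    intervalIntegral.integral_const_mul, integral_eq_sub_of_hasDerivAt hg hg'int]

section Partial

variable {E : Type*} [NormedAddCommGroup E] [NormedSpace ℝ E] {f : ℝ × ℝ → E}

noncomputable def partialFst (f : ℝ × ℝ → E) (z : ℝ × ℝ) : E := fderiv ℝ f z (1, 0)

noncomputable def partialSnd (f : ℝ × ℝ → E) (z : ℝ × ℝ) : E := fderiv ℝ f z (0, 1)

theorem DifferentiableAt.hasDerivAt_partialFst {y s : ℝ} (hf : DifferentiableAt ℝ f (y, s)) :
    HasDerivAt (fun t => f (t, s)) (partialFst f (y, s)) y :=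
  hf.hasFDerivAt.comp_hasDerivAt y ((hasDerivAt_id y).prodMk (hasDerivAt_const y s))

theorem DifferentiableAt.hasDerivAt_partialSnd {y s : ℝ} (hf : DifferentiableAt ℝ f (y, s)) :
    HasDerivAt (fun t => f (y, t)) (partialSnd f (y, s)) s :=
  hf.hasFDerivAt.comp_hasDerivAt s ((hasDerivAt_const s y).prodMk (hasDerivAt_id s))

theorem ContDiff.partialFst {m n : WithTop ℕ∞} (hf : ContDiff ℝ n f) (hmn : m + 1 ≤ n) :
    ContDiff ℝ m (partialFst f) :=
  (hf.fderiv_right hmn).clm_apply contDiff_const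

theorem ContDiff.partialSnd {m n : WithTop ℕ∞} (hf : ContDiff ℝ n f) (hmn : m + 1 ≤ n) :
    ContDiff ℝ m (partialSnd f) :=
  (hf.fderiv_right hmn).clm_apply contDiff_const

end Partial

noncomputable def wristbandRoot (α β s : ℝ) : ℝ := √((α - s) * (β + s))

noncomputable def wristbandA (α β s : ℝ) : ℝ :=
  2 / (α + β) * (s - (α - β) / 2) / wristbandRoot α β s

noncomputable def wristbandB (α β s : ℝ) : ℝ := 1 / wristbandRoot α β s

noncomputable def wristbandDensity (α β y s : ℝ) : ℝ :=
  wristbandA α β s * y + wristbandB α β s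

noncomputable def wristbandFlux (α β : ℝ) (h : ℝ → ℝ) (s : ℝ) : ℝ :=
  2 / (α + β) * wristbandRoot α β s * h s

section Wristband

variable {α β s : ℝ}

theorem continuous_wristbandRoot : Continuous (wristbandRoot α β) := by
  unfold wristbandRoot; fun_prop

theorem wristbandRoot_left : wristbandRoot α β (-β) = 0 := by simp [wristbandRoot]

theorem wristbandRoot_right : wristbandRoot α β α = 0 := by simp [wristbandRoot]

theorem measurable_wristbandA : Measurable (wristbandA α β) := by
  unfold wristbandA; have := continuous_wristbandRoot (α := α) (β := β); fun_prop

theorem measurable_wristbandB : Measurable (wristbandB α β) := by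
  unfold wristbandB; have := continuous_wristbandRoot (α := α) (β := β); fun_prop

theorem wristbandRoot_mul_self (hs : s ∈ Ioo (-β) α) :
    wristbandRoot α β s * wristbandRoot α β s = (α - s) * (β + s) :=
  Real.mul_self_sqrt (mul_pos (by linarith [hs.2]) (by linarith [hs.1])).le

theorem wristbandRoot_pos (hs : s ∈ Ioo (-β) α) : 0 < wristbandRoot α β s :=
  Real.sqrt_pos.mpr (mul_pos (by linarith [hs.2]) (by linarith [hs.1]))

theorem hasDerivAt_const_mul_wristbandRoot (hαβ : α + β ≠ 0) (hs : s ∈ Ioo (-β) α) :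
    HasDerivAt (fun t => 2 / (α + β) * wristbandRoot α β t) (-wristbandA α β s) s := by
  have hquad : HasDerivAt (fun t => (α - t) * (β + t)) (α - β - 2 * s) s :=
    (((hasDerivAt_const s α).sub (hasDerivAt_id s)).mul
      ((hasDerivAt_const s β).add (hasDerivAt_id s))).congr_deriv
        (by simp only [Pi.add_apply, Pi.sub_apply, id_eq]; ring)
  have hpos : 0 < (α - s) * (β + s) := mul_pos (by linarith [hs.2]) (by linarith [hs.1])
  refine ((hquad.sqrt hpos.ne').const_mul (2 / (α + β))).congr_deriv ?_
  have hroot : √((α - s) * (β + s)) ≠ 0 := (Real.sqrt_pos.mpr hpos).ne'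
  simp only [wristbandA, wristbandRoot]
  field_simp
  ring

theorem wristbandDensity_one_mul (hαβ : α + β ≠ 0) (hs : s ∈ Ioo (-β) α) :
    wristbandDensity α β 1 s * (α - s) = 2 / (α + β) * wristbandRoot α β s := by
  have hroot := wristbandRoot_pos hs
  have hsq := wristbandRoot_mul_self hs
  simp only [wristbandDensity, wristbandA, wristbandB]
  field_simp
  linear_combination -2 * hsq

theorem wristbandDensity_neg_one_mul (hαβ : α + β ≠ 0) (hs : s ∈ Ioo (-β) α) :
    wristbandDensity α β (-1) s * (β + s) = 2 / (α + β) * wristbandRoot α β s := by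
  have hroot := wristbandRoot_pos hs
  have hsq := wristbandRoot_mul_self hs
  simp only [wristbandDensity, wristbandA, wristbandB]
  field_simp
  linear_combination -2 * hsq

theorem wristbandDensity_one_pos (hαβ : 0 < α + β) (hs : s ∈ Ioo (-β) α) :
    0 < wristbandDensity α β 1 s := by
  have h := wristbandDensity_one_mul hαβ.ne' hs
  have : 0 < 2 / (α + β) * wristbandRoot α β s := mul_pos (by positivity) (wristbandRoot_pos hs)
  exact pos_of_mul_pos_left (h ▸ this) (by linarith [hs.2])

theorem wristbandDensity_neg_one_pos (hαβ : 0 < α + β) (hs : s ∈ Ioo (-β) α) :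
    0 < wristbandDensity α β (-1) s := by
  have h := wristbandDensity_neg_one_mul hαβ.ne' hs
  have : 0 < 2 / (α + β) * wristbandRoot α β s := mul_pos (by positivity) (wristbandRoot_pos hs)
  exact pos_of_mul_pos_left (h ▸ this) (by linarith [hs.1])

theorem abs_wristbandA_le (hαβ : 0 < α + β) (hs : s ∈ Ioo (-β) α) :
    |wristbandA α β s| ≤ wristbandB α β s := by
  have hone := wristbandDensity_one_pos hαβ hs
  have hnegone := wristbandDensity_neg_one_pos hαβ hs
  simp only [wristbandDensity] at hone hnegone
  exact abs_le.mpr ⟨by linarith, by linarith⟩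

theorem abs_wristbandDensity_le (hαβ : 0 < α + β) (hs : s ∈ Ioo (-β) α) {y : ℝ}
    (hy : |y| ≤ 1) :
    |wristbandDensity α β y s| ≤ 2 * wristbandB α β s := by
  have ha := abs_wristbandA_le hαβ hs
  have hb : 0 ≤ wristbandB α β s := (abs_nonneg _).trans ha
  calc |wristbandDensity α β y s| ≤ |wristbandA α β s| * |y| + wristbandB α β s := by
        simpa [wristbandDensity, abs_mul, abs_of_nonneg hb] using
          abs_add_le (wristbandA α β s * y) (wristbandB α β s)
    _ ≤ 2 * wristbandB α β s := by
        nlinarith [mul_le_mul ha hy (abs_nonneg y) hb]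

theorem hasDerivAt_arcsin_wristband (hαβ : 0 < α + β) (hs : s ∈ Ioo (-β) α) :
    HasDerivAt (fun t => Real.arcsin ((2 * t - (α - β)) / (α + β))) (wristbandB α β s) s := by
  set u := (2 * s - (α - β)) / (α + β)
  have hu : u ∈ Ioo (-1) 1 := by
    constructor
    · rw [lt_div_iff₀ hαβ]; linarith [hs.1]
    · rw [div_lt_iff₀ hαβ]; linarith [hs.2]
  have hlin : HasDerivAt (fun t => (2 * t - (α - β)) / (α + β)) (2 / (α + β)) s := by
    simpa using (((hasDerivAt_id s).const_mul 2).sub_const (α - β)).div_const (α + β)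
  have hsqrt : √(1 - u ^ 2) = 2 / (α + β) * wristbandRoot α β s := by
    have : 1 - u ^ 2 = (2 / (α + β)) ^ 2 * ((α - s) * (β + s)) := by
      simp only [u]; field_simp; ring
    rw [this, Real.sqrt_mul (sq_nonneg _), Real.sqrt_sq (by positivity), wristbandRoot]
  refine ((Real.hasDerivAt_arcsin hu.1.ne' hu.2.ne).comp s hlin).congr_deriv ?_
  have := wristbandRoot_pos hs
  rw [hsqrt, wristbandB]
  field_simp

theorem integrableOn_wristbandB (hαβ : 0 < α + β) :
    IntegrableOn (wristbandB α β) (Ioo (-β) α) := by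
  refine (integrableOn_deriv_of_nonneg ?_ (fun s hs => hasDerivAt_arcsin_wristband hαβ hs)
    (fun s hs => (div_pos one_pos (wristbandRoot_pos hs)).le)).mono_set Ioo_subset_Ioc_self
  exact (Real.continuous_arcsin.comp (by fun_prop)).continuousOn

theorem integrableOn_wristbandA_mul (hαβ : 0 < α + β) {h : ℝ → ℝ}
    (hh : ContinuousOn h (Icc (-β) α)) :
    IntegrableOn (fun s => wristbandA α β s * h s) (Ioo (-β) α) := by
  obtain ⟨M, hM⟩ := isCompact_Icc.exists_bound_of_continuousOn hh
  refine ((integrableOn_wristbandB hαβ).mul_const M).mono' ?_ ?_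
  · exact measurable_wristbandA.aestronglyMeasurable.mul
      ((hh.mono Ioo_subset_Icc_self).aestronglyMeasurable measurableSet_Ioo)
  · filter_upwards [ae_restrict_mem measurableSet_Ioo] with s hs
    have ha := abs_wristbandA_le hαβ hs
    rw [norm_mul, Real.norm_eq_abs]
    exact mul_le_mul ha (hM s (Ioo_subset_Icc_self hs)) (norm_nonneg _) ((abs_nonneg _).trans ha)

theorem integrableOn_wristbandFlux_deriv (hαβ : 0 < α + β) {h h' : ℝ → ℝ}
    (hh : Continuous h) (hh' : Continuous h') :
    IntegrableOn (fun s => 2 / (α + β) * wristbandRoot α β s * h' s - wristbandA α β s * h s)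
      (Ioo (-β) α) := by
  have hcont : Continuous fun s => 2 / (α + β) * wristbandRoot α β s * h' s := by
    have := continuous_wristbandRoot (α := α) (β := β); fun_prop
  exact (hcont.integrableOn_Icc.mono_set Ioo_subset_Icc_self).sub
    (integrableOn_wristbandA_mul hαβ hh.continuousOn)

theorem hasDerivAt_wristbandFlux (hαβ : α + β ≠ 0) (hs : s ∈ Ioo (-β) α) {h : ℝ → ℝ}
    {h' : ℝ} (hh : HasDerivAt h h' s) :
    HasDerivAt (wristbandFlux α β h)
      (2 / (α + β) * wristbandRoot α β s * h' - wristbandA α β s * h s) s :=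
  ((hasDerivAt_const_mul_wristbandRoot hαβ hs).mul hh).congr_deriv (by ring)

theorem integral_wristbandFlux_deriv_eq_zero (hαβ : 0 < α + β) {h h' : ℝ → ℝ}
    (hh : ∀ s, HasDerivAt h (h' s) s) (hh' : Continuous h') :
    ∫ s in Ioo (-β) α,
      (2 / (α + β) * wristbandRoot α β s * h' s - wristbandA α β s * h s) = 0 := by
  have hle : -β ≤ α := by linarith
  have hcont : Continuous h := continuous_iff_continuousAt.mpr fun s => (hh s).continuousAt
  have hflux : Continuous (wristbandFlux α β h) := by
    have := continuous_wristbandRoot (α := α) (β := β); unfold wristbandFlux; fun_prop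
  rw [← integral_Ioc_eq_integral_Ioo, ← intervalIntegral.integral_of_le hle,
    integral_eq_sub_of_hasDerivAt_of_le hle hflux.continuousOn
      (fun s hs => hasDerivAt_wristbandFlux hαβ.ne' hs (hh s))
      ((intervalIntegrable_iff_integrableOn_Ioo_of_le hle).mpr
        (integrableOn_wristbandFlux_deriv hαβ hcont hh'))]
  simp [wristbandFlux, wristbandRoot_left, wristbandRoot_right]

theorem wristbandDensity_boundary_le (hαβ : 0 < α + β) (hs : s ∈ Ioo (-β) α)
    {fyTop fyBot fsTop fsBot : ℝ} (htop : fsTop * (α - s) ≥ fyTop)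
    (hbot : fsBot * (-β - s) ≥ -fyBot) :
    wristbandDensity α β 1 s * fyTop - wristbandDensity α β (-1) s * fyBot ≤
      2 / (α + β) * wristbandRoot α β s * (fsTop - fsBot) := by
  have htop' := mul_le_mul_of_nonneg_left htop (wristbandDensity_one_pos hαβ hs).le
  have hbot' := mul_le_mul_of_nonneg_left hbot (wristbandDensity_neg_one_pos hαβ hs).le
  linear_combination htop' + hbot' + fsTop * wristbandDensity_one_mul hαβ.ne' hs
    - fsBot * wristbandDensity_neg_one_mul hαβ.ne' hs

theorem integrableOn_mul_wristbandDensity (hαβ : 0 < α + β) {φ : ℝ × ℝ → ℝ}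
    (hφ : Continuous φ) :
    IntegrableOn (fun z => φ z * wristbandDensity α β z.1 z.2)
      (Ioo (-1) 1 ×ˢ Ioo (-β) α) := by
  obtain ⟨M, hM⟩ := (isCompact_Icc.prod isCompact_Icc).exists_bound_of_continuousOn
    (hφ.continuousOn (s := Icc (-1 : ℝ) 1 ×ˢ Icc (-β) α))
  rw [IntegrableOn, Measure.volume_eq_prod, ← Measure.prod_restrict]
  refine Integrable.mono' (((integrableOn_wristbandB hαβ).const_mul (2 * M)).comp_snd _) ?_ ?_
  · exact (hφ.measurable.mul ((measurable_wristbandA.comp measurable_snd).mul measurable_fst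
      |>.add (measurable_wristbandB.comp measurable_snd))).aestronglyMeasurable
  · rw [Measure.prod_restrict]
    filter_upwards [ae_restrict_mem (measurableSet_Ioo.prod measurableSet_Ioo)]
      with z ⟨hy, hs⟩
    have hφz := hM z ⟨Ioo_subset_Icc_self hy, Ioo_subset_Icc_self hs⟩
    rw [norm_mul, Real.norm_eq_abs (wristbandDensity _ _ _ _)]
    refine (mul_le_mul hφz (abs_wristbandDensity_le hαβ hs (abs_le.mpr ⟨hy.1.le, hy.2.le⟩))
      (abs_nonneg _) ((norm_nonneg _).trans hφz)).trans_eq (by ring)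

end Wristband

theorem integral_partialFst_partialFst_mul_wristbandDensity {f : ℝ × ℝ → ℝ}
    (hf : ContDiff ℝ 2 f) (α β s : ℝ) :
    ∫ y in Ioo (-1) 1, partialFst (partialFst f) (y, s) * wristbandDensity α β y s =
      wristbandDensity α β 1 s * partialFst f (1, s) -
        wristbandDensity α β (-1) s * partialFst f (-1, s) -
        wristbandA α β s * (f (1, s) - f (-1, s)) := by
  have hf1 : ContDiff ℝ 1 (partialFst f) := hf.partialFst (by norm_num)
  have hf2 : Continuous (partialFst (partialFst f)) :=
    (hf1.partialFst (m := 0) le_rfl).continuous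
  rw [← integral_Ioc_eq_integral_Ioo, ← intervalIntegral.integral_of_le (by norm_num)]
  simp_rw [mul_comm _ (wristbandDensity α β _ s)]
  exact integral_affine_mul_deriv_deriv _ _
    (fun y _ => (hf.differentiable (by norm_num) _).hasDerivAt_partialFst)
    (fun y _ => (hf1.differentiable one_ne_zero _).hasDerivAt_partialFst)
    ((hf2.comp (by fun_prop)).intervalIntegrable _ _)

/-- Weiss's submartingale criterion verified for the wristband density (Prop. 4.2):
for every `C²` function `f` satisfying the oblique boundary inequality
`(g(y) − s) ∂ₛf ≥ sgn(y) ∂_y f` at `y = ±1` (with `g(1) = α`, `g(−1) = −β`),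
one has `∫_G ∂_{yy} f · ρ ≤ 0`, where `ρ(y,s) = a(s) y + b(s)`. -/
theorem weiss_inequality_wristband (α β : ℝ) (hα : 0 < α) (hβ : 0 < β)
    (f : ℝ × ℝ → ℝ) (hf : ContDiff ℝ 2 f)
    (hbdry_top : ∀ s ∈ Set.Ioo (-β) α,
      fderiv ℝ f (1, s) ((0 : ℝ), (1 : ℝ)) * (α - s) ≥ fderiv ℝ f (1, s) ((1 : ℝ), (0 : ℝ)))
    (hbdry_bot : ∀ s ∈ Set.Ioo (-β) α,
      fderiv ℝ f (-1, s) ((0 : ℝ), (1 : ℝ)) * (-β - s) ≥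
        -(fderiv ℝ f (-1, s) ((1 : ℝ), (0 : ℝ)))) :
    (∫ z in Set.Ioo (-1 : ℝ) 1 ×ˢ Set.Ioo (-β) α,
        (fderiv ℝ (fun w => fderiv ℝ f w ((1 : ℝ), (0 : ℝ))) z ((1 : ℝ), (0 : ℝ))) *
          ((2 / (α + β)) * (z.2 - (α - β) / 2) / Real.sqrt ((α - z.2) * (β + z.2)) * z.1 +
            1 / Real.sqrt ((α - z.2) * (β + z.2)))) ≤ 0 := by
  have hαβ : 0 < α + β := by linarith
  have hfd : Differentiable ℝ f := hf.differentiable (by norm_num)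
  have hfyy : Continuous (partialFst (partialFst f)) :=
    ((hf.partialFst (m := 1) (by norm_num)).partialFst (m := 0) le_rfl).continuous
  have hfs : Continuous (partialSnd f) := (hf.partialSnd (m := 0) (by norm_num)).continuous
  have hjump (s : ℝ) : HasDerivAt (fun t => f (1, t) - f (-1, t))
      (partialSnd f (1, s) - partialSnd f (-1, s)) s :=
    (hfd _).hasDerivAt_partialSnd.sub (hfd _).hasDerivAt_partialSnd
  have hinner : ∀ s ∈ Ioo (-β) α,
      ∫ y in Ioo (-1) 1, partialFst (partialFst f) (y, s) * wristbandDensity α β y s ≤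
        2 / (α + β) * wristbandRoot α β s * (partialSnd f (1, s) - partialSnd f (-1, s)) -
          wristbandA α β s * (f (1, s) - f (-1, s)) := fun s hs => by
    rw [integral_partialFst_partialFst_mul_wristbandDensity hf]
    exact sub_le_sub_right
      (wristbandDensity_boundary_le hαβ hs (hbdry_top s hs) (hbdry_bot s hs)) _
  change ∫ z in Ioo (-1) 1 ×ˢ Ioo (-β) α,
    partialFst (partialFst f) z * wristbandDensity α β z.1 z.2 ≤ 0
  rw [Measure.volume_eq_prod, ← integral_wristbandFlux_deriv_eq_zero hαβ hjump (by fun_prop)]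
  exact setIntegral_prod_le_of_setIntegral_le (integrableOn_mul_wristbandDensity hαβ hfyy)
    (integrableOn_wristbandFlux_deriv hαβ (by fun_prop) (by fun_prop)) measurableSet_Ioo hinner
end
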